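/- arXiv:2310.08893 — 2 statements merged into one kernel-verified Lean document; each statement's English description precedes it below -/
import Mathlib

section
/- Let (Rⁿ) be a sequence of real numbers with R⁰ > 0 such that for each n, Rⁿ⁺¹ is the positive root of aₙ·x² + (M/Δt)·x − (M/Δt)·Rⁿ = 0 for some aₙ ≥ 0 (with Rⁿ⁺¹ = Rⁿ when aₙ = 0). Then Rⁿ > 0 for all n, and the sequence (Rⁿ) is monotonically non-increasing. -/
theorem stmt_5 (M Δt : ℝ) (hM : 0 < M) (hdt : 0 < Δt)
    (R a : ℕ → ℝ) (hR0 : 0 < R 0) (ha : ∀ n, 0 ≤ a n)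
    (hstep : ∀ n, (a n = 0 → R (n + 1) = R n) ∧
      (a n ≠ 0 → 0 < R (n + 1) ∧
        a n * R (n + 1) ^ 2 + (M / Δt) * R (n + 1) - (M / Δt) * R n = 0)) :
    (∀ n, 0 < R n) ∧ (∀ n, R (n + 1) ≤ R n) := by
  have key : ∀ n, 0 < R n → 0 < R (n + 1) ∧ R (n + 1) ≤ R n := by
    intro n hn
    rcases eq_or_ne (a n) 0 with h0 | h0
    · rw [(hstep n).1 h0]; exact ⟨hn, le_refl _⟩
    · obtain ⟨hpos, heq⟩ := (hstep n).2 h0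
      refine ⟨hpos, ?_⟩
      have hm : 0 < M / Δt := div_pos hM hdt
      have hsq : 0 ≤ a n * R (n + 1) ^ 2 :=
        mul_nonneg (ha n) (sq_nonneg _)
      nlinarith
  have pos : ∀ n, 0 < R n := by
    intro n; induction n with
    | zero => exact hR0
    | succ k ih => exact (key k ih).1
  exact ⟨pos, fun n => (key n (pos n)).2⟩
end

section
/- Let M, Δt > 0, a > 0, Rⁿ > 0, and set Rⁿ⁺¹ = (−M/Δt + √((M/Δt)² + 4(M/Δt)·Rⁿ·a))/(2a). Then Rⁿ⁺¹ ≥ Rⁿ·(M/Δt)/((M/Δt) + a·Rⁿ), i.e. the decay of R at each step is controlled: Rⁿ − Rⁿ⁺¹ ≤ a·(Rⁿ)²·Δt/M · (M/Δt)/((M/Δt)+a·Rⁿ) in particular Rⁿ⁺¹ ≥ Rⁿ/(1 + a·Rⁿ·Δt/M). -/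
/-! The update is the positive root `x` of `a x² + m x = m R` with `m = M / Δt`. Since `a x² ≥ 0`
we get `x ≤ R`, and then `m R = x (a x + m) ≤ x (a R + m)`, which is the lower bound. -/

noncomputable def savUpdate (m a R : ℝ) : ℝ :=
  (-m + √(m ^ 2 + 4 * m * R * a)) / (2 * a)

lemma savUpdate_quadratic {m a R : ℝ} (ha : a ≠ 0) (hdisc : 0 ≤ m ^ 2 + 4 * m * R * a) :
    savUpdate m a R * (a * savUpdate m a R + m) = m * R := by
  have hroot : 2 * a * savUpdate m a R + m = √(m ^ 2 + 4 * m * R * a) := by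
    unfold savUpdate; field_simp; ring
  have hsq := Real.sq_sqrt hdisc
  rw [← hroot] at hsq
  apply mul_left_cancel₀ (mul_ne_zero four_ne_zero ha)
  linear_combination hsq

lemma savUpdate_nonneg {m a R : ℝ} (hm : 0 ≤ m) (ha : 0 < a) (hR : 0 ≤ R) :
    0 ≤ savUpdate m a R := by
  have : m ≤ √(m ^ 2 + 4 * m * R * a) :=
    Real.le_sqrt_of_sq_le (by nlinarith [mul_nonneg (mul_nonneg hm hR) ha.le])
  unfold savUpdate
  exact div_nonneg (by linarith) (by positivity)

lemma mul_div_le_of_mul_add_eq {m a R x : ℝ} (hm : 0 < m) (ha : 0 ≤ a) (hx : 0 ≤ x)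
    (h : x * (a * x + m) = m * R) : R * m / (m + a * R) ≤ x := by
  have hxR : x ≤ R := le_of_mul_le_mul_left (by nlinarith [mul_nonneg ha (mul_nonneg hx hx)]) hm
  have hden : 0 < m + a * R := by nlinarith [mul_nonneg ha hx]
  rw [div_le_iff₀ hden]
  calc R * m = x * (a * x + m) := by rw [h, mul_comm]
    _ ≤ x * (m + a * R) :=
      mul_le_mul_of_nonneg_left (by linarith [mul_le_mul_of_nonneg_left hxR ha]) hx

theorem stmt_6 (M Δt a Rn : ℝ) (hM : 0 < M) (hdt : 0 < Δt) (ha : 0 < a)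
    (hR : 0 < Rn) :
    let Rn1 : ℝ := (-(M / Δt) + Real.sqrt ((M / Δt) ^ 2 + 4 * (M / Δt) * Rn * a)) / (2 * a)
    Rn1 ≥ Rn * (M / Δt) / (M / Δt + a * Rn) ∧
      Rn - Rn1 ≤ a * Rn ^ 2 * Δt / M * ((M / Δt) / (M / Δt + a * Rn)) ∧
      Rn1 ≥ Rn / (1 + a * Rn * Δt / M) := by
  intro Rn1
  have hm : 0 < M / Δt := div_pos hM hdt
  have hbound : Rn * (M / Δt) / (M / Δt + a * Rn) ≤ Rn1 :=
    mul_div_le_of_mul_add_eq hm ha.le (savUpdate_nonneg hm.le ha hR.le)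
      (savUpdate_quadratic ha.ne' (by positivity))
  have hdecay : a * Rn ^ 2 * Δt / M * ((M / Δt) / (M / Δt + a * Rn))
      = Rn - Rn * (M / Δt) / (M / Δt + a * Rn) := by
    field_simp; ring
  have hratio : Rn / (1 + a * Rn * Δt / M) = Rn * (M / Δt) / (M / Δt + a * Rn) := by
    field_simp
  exact ⟨hbound, by linarith, hratio ▸ hbound⟩
end
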